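/- arXiv:1609.00195 — 2 statements merged into one kernel-verified Lean document; each statement's English description precedes it below -/
import Mathlib

section
/- The environment guard absorbs its own rely assumption: eguar(r) ⋒ rely(r) = eguar(r), where eguar(r) = (π(⊤) ⊓ ε⊥(r))^ω and rely(r) = eguar(r) ; (Nil ⊓ ε(r̄) ; Abort). -/
namespace Aczel

/-- Atomic steps: program step, environment step (with `none` denoting the
undefined/bottom state `⊥`), or termination marker `✓`. -/
inductive Step (S : Type) where
  | prog : Option S → Step S
  | env  : Option S → Step S
  | term : Step S

/-- Terminal steps `π(⊥)`, `ε(⊥)`, `✓` may occur only last in a trace. -/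
def Step.isTerminal {S : Type} : Step S → Prop
  | .prog none => True
  | .env none  => True
  | .term      => True
  | _          => False

/-- Possibly infinite sequences of steps, as partial functions on ℕ. -/
abbrev RawSeq (S : Type) := ℕ → Option (Step S)

def emptySeq (S : Type) : RawSeq S := fun _ => none

def seq1 {S : Type} (a : Step S) : RawSeq S := fun i => if i = 0 then some a else none

def seq2 {S : Type} (a b : Step S) : RawSeq S :=
  fun i => if i = 0 then some a else if i = 1 then some b else none

/-- `SeqPrefix t₁ t₂`: `t₁` is a prefix of `t₂`. -/
def SeqPrefix {S : Type} (t₁ t₂ : RawSeq S) : Prop :=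
  ∀ i s, t₁ i = some s → t₂ i = some s

def HasLength {S : Type} (t : RawSeq S) (n : ℕ) : Prop :=
  ∀ i, (t i).isSome ↔ i < n

def SeqFinite {S : Type} (t : RawSeq S) : Prop := ∃ n, HasLength t n

/-- `SnocEq t' t x`: `t` is finite and `t' = t ++ [x]`. -/
def SnocEq {S : Type} (t' t : RawSeq S) (x : Step S) : Prop :=
  ∃ n, HasLength t n ∧ (∀ i, i < n → t' i = t i) ∧ t' n = some x ∧ HasLength t' (n + 1)

/-- An Aczel trace: an initial state together with a (finite or infinite)
sequence of steps whose domain is downward closed and in which terminal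
steps occur only as the last step. -/
structure Trace (S : Type) where
  init : S
  steps : RawSeq S
  closed : ∀ i, (steps (i + 1)).isSome → (steps i).isSome
  wf : ∀ i st, steps i = some st → st.isTerminal → steps (i + 1) = none

/-- The trace refinement ordering. -/
def TrLE {S : Type} (tr₁ tr₂ : Trace S) : Prop :=
  tr₁.init = tr₂.init ∧
    (SeqPrefix tr₂.steps tr₁.steps ∨
      ∃ t₃ : RawSeq S, SnocEq tr₁.steps t₃ (Step.prog none) ∧ SeqPrefix t₃ tr₂.steps)

def emptyTrace {S : Type} (σ : S) : Trace S :=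
  ⟨σ, emptySeq S, by intro i h; simp [emptySeq] at h, by intro i st h; simp [emptySeq] at h⟩

/-- The trace `(σ₀, [π(⊥)])`. -/
def botTrace {S : Type} (σ₀ : S) : Trace S :=
  ⟨σ₀, seq1 (Step.prog none),
    by intro i h; simp [seq1] at h,
    by intro i st h _; simp [seq1]⟩

/-- Empty closure: add all empty traces. -/
def emptyClose {S : Type} (s : Set (Trace S)) : Set (Trace S) :=
  s ∪ {tr | tr.steps = emptySeq S}

/-- Prefix closure: empty closure plus all prefixes of traces of `s`. -/
def prefixClose {S : Type} (s : Set (Trace S)) : Set (Trace S) :=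
  emptyClose s ∪ {tr | ∃ tr' ∈ s, tr'.init = tr.init ∧ SeqPrefix tr.steps tr'.steps}

/-- Aborting traces of `s`: those whose extension by `π(⊥)` is in `s`. -/
def aborting {S : Type} (s : Set (Trace S)) : Set (Trace S) :=
  {tr | ∃ tr' ∈ s, tr'.init = tr.init ∧ SnocEq tr'.steps tr.steps (Step.prog none)}

/-- All extensions of traces of `s`. -/
def abortComplete {S : Type} (s : Set (Trace S)) : Set (Trace S) :=
  {tr | ∃ tr' ∈ s, tr'.init = tr.init ∧ SeqPrefix tr'.steps tr.steps}

def abortClose {S : Type} (s : Set (Trace S)) : Set (Trace S) :=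
  s ∪ abortComplete (aborting s)

/-- Commands: prefix-closed and abort-closed sets of traces. -/
def IsCommand {S : Type} (s : Set (Trace S)) : Prop :=
  s = prefixClose s ∧ s = abortClose s

/-- Refinement: `Ref c d` means `c ⊑ d`, i.e. `c ⊇ d`. -/
def Ref {S : Type} (c d : Set (Trace S)) : Prop := d ⊆ c

/-- Atomic program step command `π(r)`. -/
def Pi {S : Type} (r : Set (S × S)) : Set (Trace S) :=
  prefixClose {tr | ∃ p ∈ r, tr.init = p.1 ∧ tr.steps = seq2 (Step.prog (some p.2)) Step.term}

/-- Atomic environment step command `ε(r)`. -/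
def Eps {S : Type} (r : Set (S × S)) : Set (Trace S) :=
  prefixClose {tr | ∃ p ∈ r, tr.init = p.1 ∧ tr.steps = seq2 (Step.env (some p.2)) Step.term}

/-- Test command `τ(p)`. -/
def test {S : Type} (p : Set S) : Set (Trace S) :=
  emptyClose {tr | tr.init ∈ p ∧ tr.steps = seq1 Step.term}

def AbortC (S : Type) : Set (Trace S) := Set.univ

def MagicC (S : Type) : Set (Trace S) := emptyClose (∅ : Set (Trace S))

def NilC (S : Type) : Set (Trace S) := test Set.univ

/-- Environment abort command `⊥_ε`. -/
def EAbortC (S : Type) : Set (Trace S) :=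
  emptyClose {tr | tr.steps = seq1 (Step.env none)}

/-- `ε⊥(r)`: environment step satisfying `r`, or environment abort. -/
def EpsBot {S : Type} (r : Set (S × S)) : Set (Trace S) := Eps r ∪ EAbortC S

/-- Binary nondeterministic choice `⊓` (union, empty closed). -/
def choice {S : Type} (c₁ c₂ : Set (Trace S)) : Set (Trace S) := emptyClose (c₁ ∪ c₂)

/-- Nondeterministic choice over a set of commands `⨅ C`. -/
def NondetInf {S : Type} (C : Set (Set (Trace S))) : Set (Trace S) := emptyClose (⋃₀ C)

/-- Terminated traces of `c`: those ending in `✓`. -/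
def terminated {S : Type} (c : Set (Trace S)) : Set (Trace S) :=
  {tr | tr ∈ c ∧ ∃ t : RawSeq S, SnocEq tr.steps t Step.term}

/-- Terminating traces of `c`, with the final `✓` removed. -/
def terminating {S : Type} (c : Set (Trace S)) : Set (Trace S) :=
  {tr | ∃ tr' ∈ c, tr'.init = tr.init ∧ SnocEq tr'.steps tr.steps Step.term}

/-- `LastState tr σ`: `σ` is the last state of the (finite) trace `tr`. -/
def LastState {S : Type} (tr : Trace S) (σ : S) : Prop :=
  (HasLength tr.steps 0 ∧ σ = tr.init) ∨
    (∃ n s, HasLength tr.steps (n + 1) ∧ tr.steps n = some s ∧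
      (s = Step.prog (some σ) ∨ s = Step.env (some σ)))

/-- Concatenation `s₁ ⌢ s₂` of matching traces. -/
def seqCat {S : Type} (s₁ s₂ : Set (Trace S)) : Set (Trace S) :=
  {tr | ∃ tr₁ ∈ s₁, ∃ tr₂ ∈ s₂, ∃ n, HasLength tr₁.steps n ∧
    LastState tr₁ tr₂.init ∧ tr.init = tr₁.init ∧
    ∀ i, tr.steps i = if i < n then tr₁.steps i else tr₂.steps (i - n)}

/-- Sequential composition `c₁ ; c₂`: the unterminated traces of `c₁`
(abort closed) together with terminating traces of `c₁` (final `✓` removed)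
concatenated with matching traces of `c₂`. -/
def seqComp {S : Type} (c₁ c₂ : Set (Trace S)) : Set (Trace S) :=
  abortClose (c₁ \ terminated c₁) ∪ seqCat (terminating c₁) c₂

/-- Precondition command `pre(p)`. -/
def preC {S : Type} (p : Set S) : Set (Trace S) :=
  choice (test p) (seqComp (test pᶜ) (AbortC S))

/-- Possibly infinite iteration `c^ω = μ x. Nil ⊓ c;x` (least fixed point
w.r.t. refinement, i.e. greatest w.r.t. `⊆`, by Knaster–Tarski). -/
def omegaIter {S : Type} (c : Set (Trace S)) : Set (Trace S) :=
  ⋃₀ {x | x ⊆ choice (NilC S) (seqComp c x)}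

/-- Guarantee command `guar(g) = (π(g) ⊓ ε⊥(⊤))^ω`. -/
def guarC {S : Type} (g : Set (S × S)) : Set (Trace S) :=
  omegaIter (choice (Pi g) (EpsBot Set.univ))

/-- Environment guard `eguar(r) = (π(⊤) ⊓ ε⊥(r))^ω`. -/
def eguarC {S : Type} (r : Set (S × S)) : Set (Trace S) :=
  omegaIter (choice (Pi Set.univ) (EpsBot r))

/-- Rely command `rely(r) = eguar(r) ; (Nil ⊓ ε(r̄) ; Abort)`. -/
def relyC {S : Type} (r : Set (S × S)) : Set (Trace S) :=
  seqComp (eguarC r) (choice (NilC S) (seqComp (Eps rᶜ) (AbortC S)))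

def abortFirst {S : Type} (c₁ c₂ : Set (Trace S)) : Set (Trace S) :=
  abortComplete (aborting c₁ ∩ c₂)

/-- Weak conjunction `c₁ ⋒ c₂`. -/
def wconj {S : Type} (c₁ c₂ : Set (Trace S)) : Set (Trace S) :=
  (c₁ ∩ c₂) ∪ abortFirst c₁ c₂ ∪ abortFirst c₂ c₁

/-!
Every trace of `eguar(r)` is *allowed*: it never makes a program abort step `π(⊥)`, and each
environment step `ε(σ')` it makes from a state `σ` satisfies `(σ, σ') ∈ r`. Both properties hold
for the loop body `π(⊤) ⊓ ε⊥(r)`, whose terminating traces have exactly one step, so they pass to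
the greatest fixed point by induction on the step index.

Consequently `eguar(r)` has no aborting traces; `eguar(r) ⊆ eguar(r) ; Nil ⊆ rely(r)`; and a
trace of `rely(r)` can only abort after an `ε(r̄)` step, which no allowed trace makes. Both
abort-completion parts of `eguar(r) ⋒ rely(r)` are therefore empty, leaving
`eguar(r) ∩ rely(r) = eguar(r)`.
-/

section EGuarRely

variable {S : Type}

theorem HasLength.unique {t : RawSeq S} {m n : ℕ} (hm : HasLength t m) (hn : HasLength t n) :
    m = n := by
  by_contra hne
  rcases Nat.lt_or_gt_of_ne hne with h | h
  · exact lt_irrefl m ((hm m).mp ((hn m).mpr h))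
  · exact lt_irrefl n ((hn n).mp ((hm n).mpr h))

def StateBefore (tr : Trace S) (i : ℕ) (σ : S) : Prop :=
  (i = 0 ∧ σ = tr.init) ∨
    ∃ j, i = j + 1 ∧ (tr.steps j = some (.prog (some σ)) ∨ tr.steps j = some (.env (some σ)))

theorem StateBefore.unique {tr : Trace S} {i : ℕ} {σ σ' : S} (h : StateBefore tr i σ)
    (h' : StateBefore tr i σ') : σ = σ' := by
  rcases h with ⟨rfl, rfl⟩ | ⟨j, rfl, hj | hj⟩ <;>
    rcases h' with ⟨h0, rfl⟩ | ⟨j', hj', hj'' | hj''⟩ <;> simp_all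

theorem StateBefore.of_agree {tr tr' : Trace S} {i : ℕ} {σ : S} (h : StateBefore tr' i σ)
    (hinit : tr.init = tr'.init) (hagree : ∀ j < i, tr.steps j = tr'.steps j) :
    StateBefore tr i σ := by
  rcases h with ⟨rfl, rfl⟩ | ⟨j, rfl, hj⟩
  · exact Or.inl ⟨rfl, hinit.symm⟩
  · exact Or.inr ⟨j, rfl, by rwa [hagree j j.lt_succ_self]⟩

theorem StateBefore.of_add {tr tr₂ : Trace S} {n j : ℕ} {σ : S} (h : StateBefore tr (n + j) σ)
    (hn : StateBefore tr n tr₂.init) (hsteps : ∀ i, tr.steps (n + i) = tr₂.steps i) :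
    StateBefore tr₂ j σ := by
  cases j with
  | zero => exact Or.inl ⟨rfl, h.unique hn⟩
  | succ k =>
    obtain ⟨h0, -⟩ | ⟨j', hj', hj⟩ := h
    · omega
    · obtain rfl : j' = n + k := by omega
      exact Or.inr ⟨k, rfl, by rwa [← hsteps]⟩

def NoProgAbort (tr : Trace S) : Prop :=
  ∀ i, tr.steps i ≠ some (.prog none)

def StepAllowed (r : Set (S × S)) (tr : Trace S) (i : ℕ) : Prop :=
  tr.steps i ≠ some (.prog none) ∧
    ∀ σ σ', StateBefore tr i σ → tr.steps i = some (.env (some σ')) → (σ, σ') ∈ r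

theorem StepAllowed.of_agree {r : Set (S × S)} {tr tr' : Trace S} {i : ℕ}
    (h : StepAllowed r tr' i) (hinit : tr.init = tr'.init)
    (hagree : ∀ j ≤ i, tr.steps j = tr'.steps j) : StepAllowed r tr i := by
  rw [StepAllowed, hagree i le_rfl]
  exact ⟨h.1, fun σ σ' hσ => h.2 σ σ' (hσ.of_agree hinit.symm fun j hj => (hagree j hj.le).symm)⟩

theorem StepAllowed.of_add {r : Set (S × S)} {tr tr₂ : Trace S} {n j : ℕ}
    (h : StepAllowed r tr₂ j) (hn : StateBefore tr n tr₂.init)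
    (hsteps : ∀ i, tr.steps (n + i) = tr₂.steps i) : StepAllowed r tr (n + j) := by
  rw [StepAllowed, hsteps]
  exact ⟨h.1, fun σ σ' hσ => h.2 σ σ' (hσ.of_add hn hsteps)⟩

def StepsSatisfy (P : S → ℕ → Step S → Prop) (tr : Trace S) : Prop :=
  ∀ i st, tr.steps i = some st → P tr.init i st

theorem StepsSatisfy.noProgAbort {P : S → ℕ → Step S → Prop} {tr : Trace S}
    (h : StepsSatisfy P tr) (hP : ∀ σ i, ¬ P σ i (.prog none)) : NoProgAbort tr :=
  fun i hi => hP _ i (h i _ hi)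

theorem stepsSatisfy_of_steps_eq_emptySeq {P : S → ℕ → Step S → Prop} {tr : Trace S}
    (h : tr.steps = emptySeq S) : StepsSatisfy P tr := by
  intro i st hst
  simp [h, emptySeq] at hst

theorem stepsSatisfy_of_steps_eq_seq1 {tr : Trace S} {a : Step S} (h : tr.steps = seq1 a) :
    StepsSatisfy (fun _ _ st => st = a) tr := by
  intro i st hst
  rw [h, seq1] at hst
  split_ifs at hst
  exact (Option.some.inj hst).symm

theorem stepsSatisfy_of_mem_emptyClose {P : S → ℕ → Step S → Prop} {B : Set (Trace S)}
    (h : ∀ tr ∈ B, StepsSatisfy P tr) : ∀ tr ∈ emptyClose B, StepsSatisfy P tr := by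
  rintro tr (htr | htr)
  · exact h tr htr
  · exact stepsSatisfy_of_steps_eq_emptySeq htr

theorem stepsSatisfy_of_mem_prefixClose {P : S → ℕ → Step S → Prop} {B : Set (Trace S)}
    (h : ∀ tr ∈ B, StepsSatisfy P tr) : ∀ tr ∈ prefixClose B, StepsSatisfy P tr := by
  rintro tr (htr | ⟨tr', htr', hinit, hpre⟩)
  · exact stepsSatisfy_of_mem_emptyClose h tr htr
  · intro i st hst
    rw [← hinit]
    exact h tr' htr' i st (hpre i st hst)

/-- The shape of the steps of the atomic commands `π(g)` (`mk = prog ∘ some`) and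
`ε(g)` (`mk = env ∘ some`). -/
def AtomicStep (mk : S → Step S) (g : Set (S × S)) (σ : S) (i : ℕ) (st : Step S) : Prop :=
  (i = 0 ∧ ∃ σ', st = mk σ' ∧ (σ, σ') ∈ g) ∨ (i = 1 ∧ st = .term)

theorem stepsSatisfy_atomicStep (mk : S → Step S) (g : Set (S × S)) :
    ∀ tr ∈ prefixClose {tr : Trace S | ∃ p ∈ g, tr.init = p.1 ∧ tr.steps = seq2 (mk p.2) .term},
      StepsSatisfy (AtomicStep mk g) tr := by
  apply stepsSatisfy_of_mem_prefixClose
  rintro tr ⟨p, hp, hinit, hsteps⟩ i st hst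
  rw [hsteps, seq2] at hst
  split_ifs at hst with h0 h1
  · exact Or.inl ⟨h0, p.2, (Option.some.inj hst).symm, hinit ▸ hp⟩
  · exact Or.inr ⟨h1, (Option.some.inj hst).symm⟩

theorem noProgAbort_of_mem_eps {g : Set (S × S)} {tr : Trace S} (h : tr ∈ Eps g) :
    NoProgAbort tr :=
  (stepsSatisfy_atomicStep (fun σ => .env (some σ)) g tr h).noProgAbort (by simp [AtomicStep])

theorem stepsSatisfy_of_mem_nilC {tr : Trace S} (h : tr ∈ NilC S) :
    StepsSatisfy (fun _ _ st => st = .term) tr :=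
  stepsSatisfy_of_mem_emptyClose (fun _ h => stepsSatisfy_of_steps_eq_seq1 h.2) tr h

theorem exists_of_mem_terminating_eps {g : Set (S × S)} {tr : Trace S}
    (h : tr ∈ terminating (Eps g)) :
    HasLength tr.steps 1 ∧ ∃ σ', tr.steps 0 = some (.env (some σ')) ∧ (tr.init, σ') ∈ g := by
  obtain ⟨tr', htr', hinit, n, hlen, hagree, hterm, hlen'⟩ := h
  have hsat := stepsSatisfy_atomicStep (fun σ => .env (some σ)) g tr' htr'
  obtain rfl : n = 1 := by
    rcases hsat n _ hterm with ⟨-, σ', h, -⟩ | ⟨rfl, -⟩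
    · cases h
    · rfl
  obtain ⟨st, hst⟩ := Option.isSome_iff_exists.mp ((hlen' 0).mpr (by omega))
  rcases hsat 0 st hst with ⟨-, σ', rfl, hσ'⟩ | ⟨h, -⟩
  · exact ⟨hlen, σ', (hagree 0 one_pos).symm.trans hst, hinit ▸ hσ'⟩
  · cases h

def EGuarBodyStep (r : Set (S × S)) (σ : S) (i : ℕ) (st : Step S) : Prop :=
  st ≠ .prog none ∧ (st = .term → i = 1) ∧ ∀ σ', st = .env (some σ') → i = 0 ∧ (σ, σ') ∈ r

theorem stepsSatisfy_of_mem_eguarBody {r : Set (S × S)} {tr : Trace S}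
    (h : tr ∈ choice (Pi Set.univ) (EpsBot r)) : StepsSatisfy (EGuarBodyStep r) tr := by
  refine stepsSatisfy_of_mem_emptyClose ?_ tr h
  rintro tr (hπ | hε | hεabort) i st hst
  · rcases stepsSatisfy_atomicStep (fun σ => .prog (some σ)) _ tr hπ i st hst with
      ⟨rfl, σ', rfl, -⟩ | ⟨rfl, rfl⟩ <;> simp [EGuarBodyStep]
  · rcases stepsSatisfy_atomicStep (fun σ => .env (some σ)) r tr hε i st hst with
      ⟨rfl, σ', rfl, hσ'⟩ | ⟨rfl, rfl⟩
    · simp [EGuarBodyStep, hσ']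
    · simp [EGuarBodyStep]
  · obtain rfl : st = .env none := stepsSatisfy_of_mem_emptyClose
      (fun _ h => stepsSatisfy_of_steps_eq_seq1 h) tr hεabort i st hst
    simp [EGuarBodyStep]

theorem StepsSatisfy.stepAllowed {r : Set (S × S)} {tr : Trace S}
    (h : StepsSatisfy (EGuarBodyStep r) tr) (i : ℕ) : StepAllowed r tr i := by
  refine ⟨fun hi => (h i _ hi).1 rfl, fun σ σ' hσ hi => ?_⟩
  obtain ⟨rfl, hr⟩ := (h i _ hi).2.2 σ' rfl
  obtain ⟨-, rfl⟩ | ⟨j, hj, -⟩ := hσ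
  · exact hr
  · omega

theorem stepAllowed_of_mem_nilC {r : Set (S × S)} {tr : Trace S} (h : tr ∈ NilC S) (i : ℕ) :
    StepAllowed r tr i := by
  have hsat := stepsSatisfy_of_mem_nilC h
  refine ⟨fun hi => ?_, fun _ _ _ hi => ?_⟩ <;> cases hsat i _ hi

theorem aborting_eq_empty {s : Set (Trace S)} (h : ∀ tr ∈ s, NoProgAbort tr) :
    aborting s = ∅ :=
  Set.eq_empty_of_forall_notMem fun _ ⟨tr', htr', _, n, _, _, hn, _⟩ => h tr' htr' n hn

theorem abortComplete_empty : abortComplete (∅ : Set (Trace S)) = ∅ :=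
  Set.eq_empty_of_forall_notMem fun _ ⟨_, h, _⟩ => h

theorem wconj_eq_left {c d : Set (Trace S)} (hcd : c ⊆ d) (hc : aborting c ∩ d = ∅)
    (hd : aborting d ∩ c = ∅) : wconj c d = c := by
  simp only [wconj, abortFirst, hc, hd, abortComplete_empty, Set.union_empty,
    Set.inter_eq_left.mpr hcd]

theorem subset_choice_left (c₁ c₂ : Set (Trace S)) : c₁ ⊆ choice c₁ c₂ :=
  fun _ h => Or.inl (Or.inl h)

theorem seqComp_mono_right {c d d' : Set (Trace S)} (h : d ⊆ d') :
    seqComp c d ⊆ seqComp c d' :=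
  Set.union_subset_union_right _ fun _ ⟨tr₁, h₁, tr₂, h₂, rest⟩ => ⟨tr₁, h₁, tr₂, h h₂, rest⟩

theorem seqComp_eq_of_noProgAbort {c d : Set (Trace S)} (hc : ∀ tr ∈ c, NoProgAbort tr) :
    seqComp c d = (c \ terminated c) ∪ seqCat (terminating c) d := by
  rw [seqComp, abortClose, aborting_eq_empty fun tr h => hc tr h.1, abortComplete_empty,
    Set.union_empty]

theorem exists_lastState_of_mem_terminating {c : Set (Trace S)} {tr : Trace S}
    (h : tr ∈ terminating c) : ∃ σ, LastState tr σ := by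
  obtain ⟨tr', -, -, n, hlen, hagree, hterm, -⟩ := h
  cases n with
  | zero => exact ⟨tr.init, Or.inl ⟨hlen, rfl⟩⟩
  | succ m =>
    obtain ⟨s, hs⟩ := Option.isSome_iff_exists.mp ((hlen m).mpr m.lt_succ_self)
    have hnt : ¬ s.isTerminal := fun ht => by
      simp [tr'.wf m s ((hagree m m.lt_succ_self).trans hs) ht] at hterm
    rcases s with (_ | σ) | (_ | σ) | _
    · exact absurd trivial hnt
    · exact ⟨σ, Or.inr ⟨m, _, hlen, hs, Or.inl rfl⟩⟩
    · exact absurd trivial hnt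
    · exact ⟨σ, Or.inr ⟨m, _, hlen, hs, Or.inr rfl⟩⟩
    · exact absurd trivial hnt

def Trace.single (σ : S) (a : Step S) : Trace S where
  init := σ
  steps := seq1 a
  closed := by intro i hi; simp [seq1] at hi
  wf := by intro i st _ _; simp [seq1]

theorem subset_seqComp_nilC (c : Set (Trace S)) : c ⊆ seqComp c (NilC S) := by
  intro tr htr
  by_cases hterm : tr ∈ terminated c
  swap
  · exact Or.inl (Or.inl ⟨htr, hterm⟩)
  obtain ⟨-, t, n, hlen, hagree, hn, hlen'⟩ := hterm
  let tr₁ : Trace S :=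
    { init := tr.init
      steps := t
      closed := fun i hi => (hlen i).mpr (by have := (hlen (i + 1)).mp hi; omega)
      wf := fun i st hst hT => by
        have hi : i < n := (hlen i).mp (by simp [hst])
        have hnone := tr.wf i st ((hagree i hi).trans hst) hT
        have hsome := (hlen' (i + 1)).mpr (by omega)
        simp [hnone] at hsome }
  have h₁ : tr₁ ∈ terminating c := ⟨tr, htr, rfl, n, hlen, hagree, hn, hlen'⟩
  obtain ⟨σ, hσ⟩ := exists_lastState_of_mem_terminating h₁
  refine Or.inr ⟨tr₁, h₁, Trace.single σ .term, Or.inl ⟨trivial, rfl⟩, n, hlen, hσ, rfl,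
    fun i => ?_⟩
  rcases lt_trichotomy i n with hi | rfl | hi
  · rw [if_pos hi]
    exact hagree i hi
  · simp [Trace.single, seq1, hn]
  · have hnone : tr.steps i = none :=
      Option.not_isSome_iff_eq_none.mp fun h => by have := (hlen' i).mp h; omega
    simp [Trace.single, seq1, hnone, hi.not_gt, Nat.sub_ne_zero_of_lt hi]

structure IsConcat (tr tr₁ tr₂ : Trace S) (n : ℕ) : Prop where
  length : HasLength tr₁.steps n
  init : tr.init = tr₁.init
  left : ∀ i < n, tr.steps i = tr₁.steps i
  stateBefore : StateBefore tr n tr₂.init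
  right : ∀ i, tr.steps (n + i) = tr₂.steps i

theorem exists_isConcat_of_mem_seqCat {s₁ s₂ : Set (Trace S)} {tr : Trace S}
    (h : tr ∈ seqCat s₁ s₂) : ∃ tr₁ ∈ s₁, ∃ tr₂ ∈ s₂, ∃ n, IsConcat tr tr₁ tr₂ n := by
  obtain ⟨tr₁, h₁, tr₂, h₂, n, hlen, hlast, hinit, hsteps⟩ := h
  have hleft : ∀ i < n, tr.steps i = tr₁.steps i := fun i hi => by rw [hsteps, if_pos hi]
  refine ⟨tr₁, h₁, tr₂, h₂, n, hlen, hinit, hleft, ?_, fun i => ?_⟩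
  · rcases hlast with ⟨hlen₀, hσ⟩ | ⟨m, s, hlenm, hs, hσ⟩
    · obtain rfl := hlen.unique hlen₀
      exact Or.inl ⟨rfl, hσ.trans hinit.symm⟩
    · obtain rfl := hlen.unique hlenm
      refine Or.inr ⟨m, rfl, ?_⟩
      rw [hleft m m.lt_succ_self, hs]
      rcases hσ with rfl | rfl <;> simp
  · rw [hsteps, if_neg (by omega), Nat.add_sub_cancel_left]

/-- Strong induction on the step index works because, by `hc₀`, every unfolding of `x` through
`c ; x` consumes at least one step. -/
theorem stepAllowed_of_subset_iterate {r : Set (S × S)} {c x : Set (Trace S)}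
    (hc : ∀ tr ∈ c, ∀ i, StepAllowed r tr i) (hc₀ : ∀ tr ∈ c, tr.steps 0 ≠ some .term)
    (hx : x ⊆ choice (NilC S) (seqComp c x)) (i : ℕ) : ∀ tr ∈ x, StepAllowed r tr i := by
  rw [seqComp_eq_of_noProgAbort fun tr h j => (hc tr h j).1] at hx
  induction i using Nat.strong_induction_on with
  | _ i ih =>
  intro tr htr
  rcases hx htr with (hnil | hbody | hcat) | hempty
  · exact stepAllowed_of_mem_nilC hnil i
  · exact hc tr hbody.1 i
  · obtain ⟨tr₁, ⟨tr', htr', hinit, n', hlen', hagree', hterm, -⟩, tr₂, htr₂, n, hcat⟩ :=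
      exists_isConcat_of_mem_seqCat hcat
    obtain rfl := hcat.length.unique hlen'
    have hn : 0 < n := Nat.pos_of_ne_zero fun h => hc₀ tr' htr' (h ▸ hterm)
    rcases lt_or_ge i n with hi | hi
    · exact (hc tr' htr' i).of_agree (hcat.init.trans hinit.symm) fun j hj =>
        (hcat.left j (by omega)).trans (hagree' j (by omega)).symm
    · obtain ⟨j, rfl⟩ := Nat.exists_eq_add_of_le hi
      exact (ih j (by omega) tr₂ htr₂).of_add hcat.stateBefore hcat.right
  · exact (stepsSatisfy_of_steps_eq_emptySeq (P := EGuarBodyStep r) hempty).stepAllowed i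

theorem stepAllowed_of_mem_eguarC {r : Set (S × S)} {tr : Trace S} (h : tr ∈ eguarC r)
    (i : ℕ) : StepAllowed r tr i := by
  obtain ⟨x, hx, htr⟩ := h
  refine stepAllowed_of_subset_iterate (fun tr h => (stepsSatisfy_of_mem_eguarBody h).stepAllowed)
    (fun tr h h₀ => ?_) hx i tr htr
  cases (stepsSatisfy_of_mem_eguarBody h 0 _ h₀).2.1 rfl

theorem exists_isConcat_of_progAbort_mem_seqComp {c d : Set (Trace S)} {tr : Trace S} {m : ℕ}
    (hc : ∀ tr ∈ c, NoProgAbort tr) (htr : tr ∈ seqComp c d)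
    (hm : tr.steps m = some (.prog none)) :
    ∃ tr₁ ∈ terminating c, ∃ tr₂ ∈ d, ∃ n k, IsConcat tr tr₁ tr₂ n ∧ m = n + k := by
  rw [seqComp_eq_of_noProgAbort hc] at htr
  rcases htr with hc₁ | hcat
  · exact absurd hm (hc tr hc₁.1 m)
  obtain ⟨tr₁, h₁, tr₂, h₂, n, hcat⟩ := exists_isConcat_of_mem_seqCat hcat
  refine ⟨tr₁, h₁, tr₂, h₂, n, m - n, hcat, ?_⟩
  by_contra hlt
  obtain ⟨tr', htr', -, n', hlen', hagree', -⟩ := h₁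
  obtain rfl := hcat.length.unique hlen'
  exact hc tr' htr' m (by rw [hagree' m (by omega), ← hcat.left m (by omega), hm])

theorem aborting_eguarC (r : Set (S × S)) : aborting (eguarC r) = ∅ :=
  aborting_eq_empty fun _ h i => (stepAllowed_of_mem_eguarC h i).1

theorem eguarC_subset_relyC (r : Set (S × S)) : eguarC r ⊆ relyC r :=
  (subset_seqComp_nilC _).trans (seqComp_mono_right (subset_choice_left _ _))

theorem aborting_relyC_inter_eguarC (r : Set (S × S)) :
    aborting (relyC r) ∩ eguarC r = ∅ := by
  refine Set.eq_empty_of_forall_notMem ?_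
  rintro tr ⟨⟨tr', hrely, hinit, m, -, hagree, hm, -⟩, heguar⟩
  obtain ⟨_, _, tr₂, htail, n, k, hcat, rfl⟩ := exists_isConcat_of_progAbort_mem_seqComp
    (fun _ h i => (stepAllowed_of_mem_eguarC h i).1) hrely hm
  have hk : tr₂.steps k = some (.prog none) := (hcat.right k).symm.trans hm
  rcases htail with (hnil | hviol) | hempty
  · cases stepsSatisfy_of_mem_nilC hnil k _ hk
  · obtain ⟨u₁, hu₁, _, _, n', k', hcat₂, rfl⟩ :=
      exists_isConcat_of_progAbort_mem_seqComp (fun _ h => noProgAbort_of_mem_eps h) hviol hk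
    obtain ⟨hlen₁, σ', hu₀, hσ'⟩ := exists_of_mem_terminating_eps hu₁
    obtain rfl := hcat₂.length.unique hlen₁
    -- the `ε(r̄)` step `ε(σ')` is step `n` of `tr'`, hence of `tr`, taken in state `tr₂.init`
    have henv : tr'.steps n = some (.env (some σ')) := by
      rw [← add_zero n, hcat.right, hcat₂.left 0 one_pos, hu₀]
    have hallowed : StepAllowed r tr' n :=
      (stepAllowed_of_mem_eguarC heguar n).of_agree hinit fun j hj => hagree j (by omega)
    exact hσ' (hcat₂.init ▸ hallowed.2 _ σ' hcat.stateBefore henv)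
  · exact stepsSatisfy_of_steps_eq_emptySeq (P := fun _ _ _ => False) hempty k _ hk

end EGuarRely

/-- The environment guard absorbs its own rely: `eguar(r) ⋒ rely(r) = eguar(r)`. -/
theorem eguar_wconj_rely {S : Type} (r : Set (S × S)) :
    wconj (eguarC r) (relyC r) = eguarC r :=
  wconj_eq_left (eguarC_subset_relyC r) (by rw [aborting_eguarC, Set.empty_inter])
    (aborting_relyC_inter_eguarC r)

end Aczel
end

section
/- For any binary relation r and commands c, d: if rely(r) ⋒ c ⊑ d then c ⊑ eguar(r) ⋒ d. -/
namespace Aczel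

/-! ### Auxiliary development -/

/-- The state of a trace just before step `i`. -/
def StateAt {S : Type} (tr : Trace S) : ℕ → S → Prop
  | 0, σ => σ = tr.init
  | (i+1), σ => tr.steps i = some (Step.prog (some σ)) ∨ tr.steps i = some (Step.env (some σ))

lemma hasLength_unique {S : Type} {t : RawSeq S} {n m : ℕ}
    (h1 : HasLength t n) (h2 : HasLength t m) : n = m := by
  by_contra h
  rcases Nat.lt_or_ge n m with hl | hl
  · have h3 := (h2 n).mpr hl
    have h4 := (h1 n).mp h3
    omega
  · rcases Nat.lt_or_ge m n with hl2 | hl2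
    · have h3 := (h1 m).mpr hl2
      have h4 := (h2 m).mp h3
      omega
    · omega

lemma seq2_cases {S : Type} {a b : Step S} {i : ℕ} {st : Step S}
    (h : seq2 a b i = some st) : (i = 0 ∧ st = a) ∨ (i = 1 ∧ st = b) := by
  unfold seq2 at h
  split_ifs at h <;> simp_all

lemma seq1_cases {S : Type} {a : Step S} {i : ℕ} {st : Step S}
    (h : seq1 a i = some st) : i = 0 ∧ st = a := by
  unfold seq1 at h; split_ifs at h <;> simp_all

lemma pi_char {S : Type} {g : Set (S × S)} {tr : Trace S} (h : tr ∈ Pi g) :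
    tr.steps = emptySeq S ∨
      ∃ p ∈ g, tr.init = p.1 ∧
        SeqPrefix tr.steps (seq2 (Step.prog (some p.2)) Step.term) := by
  simp only [Pi, prefixClose, emptyClose, Set.mem_union, Set.mem_setOf_eq] at h
  rcases h with (⟨p, hp, hi, hs⟩ | he) | ⟨tr', ⟨p, hp, hi, hs⟩, hi2, hpre⟩
  · exact Or.inr ⟨p, hp, hi, by intro i s h'; rw [hs] at h'; exact h'⟩
  · exact Or.inl he
  · refine Or.inr ⟨p, hp, hi2 ▸ hi, ?_⟩
    intro i s h'
    rw [← hs]; exact hpre i s h'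

lemma eps_char {S : Type} {g : Set (S × S)} {tr : Trace S} (h : tr ∈ Eps g) :
    tr.steps = emptySeq S ∨
      ∃ p ∈ g, tr.init = p.1 ∧
        SeqPrefix tr.steps (seq2 (Step.env (some p.2)) Step.term) := by
  simp only [Eps, prefixClose, emptyClose, Set.mem_union, Set.mem_setOf_eq] at h
  rcases h with (⟨p, hp, hi, hs⟩ | he) | ⟨tr', ⟨p, hp, hi, hs⟩, hi2, hpre⟩
  · exact Or.inr ⟨p, hp, hi, by intro i s h'; rw [hs] at h'; exact h'⟩
  · exact Or.inl he
  · refine Or.inr ⟨p, hp, hi2 ▸ hi, ?_⟩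
    intro i s h'
    rw [← hs]; exact hpre i s h'

lemma eabort_char {S : Type} {tr : Trace S} (h : tr ∈ EAbortC S) :
    tr.steps = emptySeq S ∨ tr.steps = seq1 (Step.env none) := by
  simp only [EAbortC, emptyClose, Set.mem_union, Set.mem_setOf_eq] at h
  tauto

lemma nil_char {S : Type} {tr : Trace S} (h : tr ∈ NilC S) :
    tr.steps = emptySeq S ∨ tr.steps = seq1 Step.term := by
  simp only [NilC, test, emptyClose, Set.mem_union, Set.mem_setOf_eq] at h
  tauto

/-- The atomic step command of `eguar`. -/
lemma base_step {S : Type} {r : Set (S × S)} {tr : Trace S}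
    (h : tr ∈ choice (Pi (Set.univ : Set (S × S))) (EpsBot r)) {i : ℕ} {st : Step S}
    (hs : tr.steps i = some st) :
    (i = 0 ∧ ((∃ σ, st = Step.prog (some σ)) ∨ st = Step.env none ∨
        ∃ σ, st = Step.env (some σ) ∧ (tr.init, σ) ∈ r)) ∨
    (i = 1 ∧ st = Step.term ∧ ∃ σ, (tr.steps 0 = some (Step.prog (some σ)) ∨
        (tr.steps 0 = some (Step.env (some σ)) ∧ (tr.init, σ) ∈ r))) := by
  simp only [choice, emptyClose, Set.mem_union, Set.mem_setOf_eq] at h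
  rcases h with (hpi | heb) | hemp
  · rcases pi_char hpi with he | ⟨p, _, hi, hpre⟩
    · rw [he] at hs; simp [emptySeq] at hs
    · have h2 := hpre i st hs
      rcases seq2_cases h2 with ⟨hi0, hst⟩ | ⟨hi1, hst⟩
      · exact Or.inl ⟨hi0, Or.inl ⟨p.2, hst⟩⟩
      · refine Or.inr ⟨hi1, hst, ?_⟩
        have h0s : (tr.steps 0).isSome := by
          apply tr.closed 0
          rw [show (0:ℕ)+1 = 1 from rfl, ← hi1, hs]; rfl
        obtain ⟨st0, hst0⟩ := Option.isSome_iff_exists.mp h0s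
        have h3 := hpre 0 st0 hst0
        rcases seq2_cases h3 with ⟨_, hst0e⟩ | ⟨h01, _⟩
        · exact ⟨p.2, Or.inl (hst0e ▸ hst0)⟩
        · omega
  · rcases heb with heps | hea
    · rcases eps_char heps with he | ⟨p, hp, hi, hpre⟩
      · rw [he] at hs; simp [emptySeq] at hs
      · have hpr : (tr.init, p.2) ∈ r := by rw [hi]; simpa using hp
        have h2 := hpre i st hs
        rcases seq2_cases h2 with ⟨hi0, hst⟩ | ⟨hi1, hst⟩
        · exact Or.inl ⟨hi0, Or.inr (Or.inr ⟨p.2, hst, hpr⟩)⟩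
        · refine Or.inr ⟨hi1, hst, ?_⟩
          have h0s : (tr.steps 0).isSome := by
            apply tr.closed 0
            rw [show (0:ℕ)+1 = 1 from rfl, ← hi1, hs]; rfl
          obtain ⟨st0, hst0⟩ := Option.isSome_iff_exists.mp h0s
          have h3 := hpre 0 st0 hst0
          rcases seq2_cases h3 with ⟨_, hst0e⟩ | ⟨h01, _⟩
          · exact ⟨p.2, Or.inr ⟨hst0e ▸ hst0, hpr⟩⟩
          · omega
    · rcases eabort_char hea with he | he
      · rw [he] at hs; simp [emptySeq] at hs
      · rw [he] at hs
        obtain ⟨hi0, hst⟩ := seq1_cases hs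
        exact Or.inl ⟨hi0, Or.inr (Or.inl hst)⟩
  · rw [hemp] at hs; simp [emptySeq] at hs

lemma eps_step {S : Type} {q : Set (S × S)} {tr : Trace S}
    (h : tr ∈ Eps q) {i : ℕ} {st : Step S} (hs : tr.steps i = some st) :
    (i = 0 ∧ ∃ σ, st = Step.env (some σ) ∧ (tr.init, σ) ∈ q) ∨
    (i = 1 ∧ st = Step.term ∧
      ∃ σ, tr.steps 0 = some (Step.env (some σ)) ∧ (tr.init, σ) ∈ q) := by
  rcases eps_char h with he | ⟨p, hp, hi, hpre⟩
  · rw [he] at hs; simp [emptySeq] at hs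
  · have hpr : (tr.init, p.2) ∈ q := by rw [hi]; simpa using hp
    have h2 := hpre i st hs
    rcases seq2_cases h2 with ⟨hi0, hst⟩ | ⟨hi1, hst⟩
    · exact Or.inl ⟨hi0, p.2, hst, hpr⟩
    · refine Or.inr ⟨hi1, hst, ?_⟩
      have h0s : (tr.steps 0).isSome := by
        apply tr.closed 0
        rw [show (0:ℕ)+1 = 1 from rfl, ← hi1, hs]; rfl
      obtain ⟨st0, hst0⟩ := Option.isSome_iff_exists.mp h0s
      have h3 := hpre 0 st0 hst0
      rcases seq2_cases h3 with ⟨_, hst0e⟩ | ⟨h01, _⟩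
      · exact ⟨p.2, hst0e ▸ hst0, hpr⟩
      · omega

lemma terminating_base_char {S : Type} {r : Set (S × S)} {tr : Trace S}
    (h : tr ∈ terminating (choice (Pi (Set.univ : Set (S × S))) (EpsBot r))) :
    HasLength tr.steps 1 ∧ ∃ σ, (tr.steps 0 = some (Step.prog (some σ)) ∨
      (tr.steps 0 = some (Step.env (some σ)) ∧ (tr.init, σ) ∈ r)) := by
  obtain ⟨u, hu, hui, n, hlen, hagree, hun, hulen⟩ := h
  rcases base_step hu hun with ⟨_, hforms⟩ | ⟨hn1, _, σ, hσ⟩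
  · simp at hforms
  · subst hn1
    refine ⟨hlen, σ, ?_⟩
    rw [← hagree 0 one_pos, ← hui]
    exact hσ

lemma terminating_eps_char {S : Type} {q : Set (S × S)} {tr : Trace S}
    (h : tr ∈ terminating (Eps q)) :
    HasLength tr.steps 1 ∧
      ∃ σ, tr.steps 0 = some (Step.env (some σ)) ∧ (tr.init, σ) ∈ q := by
  obtain ⟨u, hu, hui, n, hlen, hagree, hun, hulen⟩ := h
  rcases eps_step hu hun with ⟨_, _, hforms, _⟩ | ⟨hn1, _, σ, hσ, hσr⟩
  · simp at hforms
  · subst hn1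
    refine ⟨hlen, σ, ?_, ?_⟩
    · rw [← hagree 0 one_pos]; exact hσ
    · rw [← hui]; exact hσr

lemma eguar_unfold {S : Type} (r : Set (S × S)) :
    eguarC r ⊆ choice (NilC S)
      (seqComp (choice (Pi (Set.univ : Set (S × S))) (EpsBot r)) (eguarC r)) := by
  intro tr htr
  obtain ⟨x, hx, htrx⟩ := htr
  have hsub : x ⊆ eguarC r := fun t ht => ⟨x, hx, ht⟩
  have h2 := hx htrx
  simp only [choice, emptyClose, seqComp, Set.mem_union, Set.mem_setOf_eq] at h2 ⊢
  rcases h2 with (hnil | (hab | hcat)) | hemp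
  · exact Or.inl (Or.inl hnil)
  · exact Or.inl (Or.inr (Or.inl hab))
  · obtain ⟨t1, h1, t2, h2', rest⟩ := hcat
    exact Or.inl (Or.inr (Or.inr ⟨t1, h1, t2, hsub h2', rest⟩))
  · exact Or.inr hemp

/-- Key structural property of `eguar r` traces. -/
lemma eguar_step {S : Type} {r : Set (S × S)} :
    ∀ i : ℕ, ∀ tr ∈ eguarC r, ∀ st : Step S, tr.steps i = some st →
      (∃ σ, st = Step.prog (some σ)) ∨ st = Step.term ∨ st = Step.env none ∨
      (∃ σ₂, st = Step.env (some σ₂) ∧ ∀ σ₁, StateAt tr i σ₁ → (σ₁, σ₂) ∈ r) := by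
  intro i
  induction i using Nat.strong_induction_on with
  | _ i IH =>
  intro tr htr st hs
  have h2 := eguar_unfold r htr
  simp only [choice, emptyClose, seqComp, Set.mem_union, Set.mem_setOf_eq] at h2
  rcases h2 with (hnil | (hab | hcat)) | hemp
  · rcases nil_char hnil with he | he
    · rw [he] at hs; simp [emptySeq] at hs
    · rw [he] at hs
      obtain ⟨_, hst⟩ := seq1_cases hs
      exact Or.inr (Or.inl hst)
  · -- abortClose (base \ terminated base)
    rcases hab with ⟨hbase, _⟩ | ⟨t, ⟨u, ⟨hub, _⟩, _, k, _, _, huk, _⟩, _, _⟩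
    · rcases base_step hbase hs with ⟨hi0, hforms⟩ | ⟨_, hst, _⟩
      · subst hi0
        rcases hforms with ⟨σ, hst⟩ | hst | ⟨σ, hst, hr⟩
        · exact Or.inl ⟨σ, hst⟩
        · exact Or.inr (Or.inr (Or.inl hst))
        · refine Or.inr (Or.inr (Or.inr ⟨σ, hst, ?_⟩))
          intro σ₁ h1
          simp only [StateAt] at h1
          rw [h1]; exact hr
      · exact Or.inr (Or.inl hst)
    · rcases base_step hub huk with ⟨_, hforms⟩ | ⟨_, hst, _⟩
      · simp at hforms
      · simp at hst
  · -- seqCat (terminating base) (eguarC r)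
    obtain ⟨tr₁, h1, tr₂, h2', n, hn, hlast, hinit, hsteps⟩ := hcat
    obtain ⟨hlen1, σv, hσv⟩ := terminating_base_char h1
    have hn1 : n = 1 := hasLength_unique hn hlen1
    subst hn1
    rcases hlast with ⟨hl0, _⟩ | ⟨k, s, hlk, hks, hform⟩
    · exact absurd (hasLength_unique hl0 hlen1) (by omega)
    · have hk0 : k = 0 := by have := hasLength_unique hlk hlen1; omega
      subst hk0
      cases i with
      | zero =>
        have h0 : tr.steps 0 = tr₁.steps 0 := by rw [hsteps 0]; simp
        rcases hσv with hp | ⟨he, hr⟩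
        · rw [h0, hp] at hs
          exact Or.inl ⟨σv, (Option.some_injective _ hs).symm⟩
        · rw [h0, he] at hs
          have hstv : st = Step.env (some σv) := (Option.some_injective _ hs).symm
          refine Or.inr (Or.inr (Or.inr ⟨σv, hstv, ?_⟩))
          intro σ₁ h1
          simp only [StateAt] at h1
          rw [h1, hinit]; exact hr
      | succ j =>
        have hj : tr.steps (j+1) = tr₂.steps j := by
          rw [hsteps (j+1), if_neg (by omega)]; congr 1
        have hok := IH j (by omega) tr₂ h2' st (by rw [← hj]; exact hs)
        rcases hok with h | h | h | ⟨σ₂, hst, hall⟩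
        · exact Or.inl h
        · exact Or.inr (Or.inl h)
        · exact Or.inr (Or.inr (Or.inl h))
        · refine Or.inr (Or.inr (Or.inr ⟨σ₂, hst, ?_⟩))
          intro σ₁ hstate
          apply hall σ₁
          cases j with
          | zero =>
            have h0 : tr.steps 0 = some s := by rw [hsteps 0, if_pos one_pos]; exact hks
            simp only [StateAt] at hstate ⊢
            rcases hform with hf | hf <;> rcases hstate with hst1 | hst1 <;>
              (rw [h0, hf] at hst1; simp_all)
          | succ l =>
            have he : tr.steps (l+1) = tr₂.steps l := by
              rw [hsteps (l+1), if_neg (by omega)]; congr 1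
            simp only [StateAt] at hstate ⊢
            rw [he] at hstate
            exact hstate
  · rw [hemp] at hs; simp [emptySeq] at hs

lemma eguar_no_pnone {S : Type} {r : Set (S × S)} {tr : Trace S}
    (h : tr ∈ eguarC r) (i : ℕ) : tr.steps i ≠ some (Step.prog none) := by
  intro hs
  rcases eguar_step i tr h _ hs with ⟨σ, h'⟩ | h' | h' | ⟨σ, h', _⟩ <;> simp at h'

lemma terminating_no_pnone {S : Type} {c : Set (Trace S)}
    (hc : ∀ tr ∈ c, ∀ i, tr.steps i ≠ some (Step.prog none)) {tr : Trace S}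
    (h : tr ∈ terminating c) (i : ℕ) : tr.steps i ≠ some (Step.prog none) := by
  obtain ⟨u, hu, _, n, hlen, hagree, _, _⟩ := h
  intro hs
  have hi : i < n := (hlen i).mp (by rw [hs]; rfl)
  exact hc u hu i (by rw [hagree i hi]; exact hs)

/-- If a trace of `rely r` contains a `π(⊥)` step, it contains an earlier
environment step violating `r`. -/
lemma rely_pnone {S : Type} {r : Set (S × S)} {v : Trace S} (hv : v ∈ relyC r)
    {n : ℕ} (hn : v.steps n = some (Step.prog none)) :
    ∃ m < n, ∃ σ₁ σ₂, v.steps m = some (Step.env (some σ₂)) ∧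
      StateAt v m σ₁ ∧ (σ₁, σ₂) ∉ r := by
  simp only [relyC, seqComp, abortClose, Set.mem_union, Set.mem_setOf_eq] at hv
  rcases hv with (⟨heg, _⟩ | ⟨t, ⟨u, ⟨hu, _⟩, _, k, _, _, huk, _⟩, _, _⟩) | hcat
  · exact absurd hn (eguar_no_pnone heg n)
  · exact absurd huk (eguar_no_pnone hu k)
  · obtain ⟨v₁, h1, v₂, h2, m, hm, hlast, hinit, hsteps⟩ := hcat
    have hnm : ¬ n < m := by
      intro hlt
      have : v₁.steps n = some (Step.prog none) := by
        rw [← hn, hsteps n, if_pos hlt]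
      exact terminating_no_pnone (fun u hu i => eguar_no_pnone hu i) h1 n this
    have hv2n : v₂.steps (n - m) = some (Step.prog none) := by
      rw [← hn, hsteps n, if_neg hnm]
    simp only [choice, emptyClose, seqComp, abortClose, Set.mem_union,
      Set.mem_setOf_eq] at h2
    rcases h2 with (hnil | hsc) | hemp
    · rcases nil_char hnil with he | he
      · rw [he] at hv2n; simp [emptySeq] at hv2n
      · rw [he] at hv2n
        obtain ⟨_, hst⟩ := seq1_cases hv2n
        simp at hst
    · rcases hsc with (⟨heps, _⟩ | ⟨t, ⟨u, ⟨hu, _⟩, _, k, _, _, huk, _⟩, _, _⟩) | hcat2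
      · rcases eps_step heps hv2n with ⟨_, _, hst, _⟩ | ⟨_, hst, _⟩ <;> simp at hst
      · rcases eps_step hu huk with ⟨_, _, hst, _⟩ | ⟨_, hst, _⟩ <;> simp at hst
      · obtain ⟨e, he, w, _, k, hk, hlast2, hinit2, hsteps2⟩ := hcat2
        obtain ⟨hlen1, σ₂, hσ₂, hσ₂r⟩ := terminating_eps_char he
        have hk1 : k = 1 := hasLength_unique hk hlen1
        subst hk1
        have hv20 : v₂.steps 0 = some (Step.env (some σ₂)) := by
          rw [hsteps2 0, if_pos one_pos]; exact hσ₂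
        have hge : 1 ≤ n - m := by
          by_contra hlt
          have h0 : n - m = 0 := by omega
          rw [h0, hv20] at hv2n
          simp at hv2n
        have hmn : m < n := by omega
        have hnr : (e.init, σ₂) ∉ r := hσ₂r
        have hv2e : v₂.init = e.init := hinit2
        have hvm : v.steps m = some (Step.env (some σ₂)) := by
          rw [hsteps m, if_neg (by omega), Nat.sub_self]; exact hv20
        refine ⟨m, hmn, v₂.init, σ₂, hvm, ?_, by rw [hv2e]; exact hnr⟩
        rcases hlast with ⟨hl0, heq⟩ | ⟨k2, s, hlk2, hks2, hform⟩
        · have hm0 : m = 0 := hasLength_unique hm hl0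
          subst hm0
          simp only [StateAt]
          rw [heq, ← hinit]
        · have hm2 : m = k2 + 1 := hasLength_unique hm hlk2
          subst hm2
          simp only [StateAt]
          have hvk2 : v.steps k2 = some s := by
            rw [hsteps k2, if_pos (by omega)]; exact hks2
          rcases hform with hf | hf
          · exact Or.inl (by rw [hvk2, hf])
          · exact Or.inr (by rw [hvk2, hf])
    · rw [hemp] at hv2n; simp [emptySeq] at hv2n

/-- A trace of `eguar r` cannot have a prefix whose `π(⊥)`-extension is in
`rely r`. -/
lemma eguar_contra {S : Type} {r : Set (S × S)} {tr v : Trace S}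
    (htr : tr ∈ eguarC r) (hv : v ∈ relyC r) {n : ℕ}
    (hn : v.steps n = some (Step.prog none))
    (hinit : v.init = tr.init)
    (hpre : ∀ i s, i < n → v.steps i = some s →
      tr.steps i = some s ∨ s = Step.prog none) : False := by
  obtain ⟨m, hmn, σ₁, σ₂, hstep, hstate, hnr⟩ := rely_pnone hv hn
  rcases hpre m _ hmn hstep with htrm | habs
  · rcases eguar_step m tr htr _ htrm with ⟨σ, h'⟩ | h' | h' | ⟨σ₂', hst, hall⟩
    · simp at h'
    · simp at h'
    · simp at h'
    · have hσ : σ₂' = σ₂ := by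
        have := hst
        simp only [Step.env.injEq, Option.some.injEq] at this
        exact this.symm
      subst hσ
      apply hnr
      apply hall σ₁
      cases m with
      | zero =>
        simp only [StateAt] at hstate ⊢
        rw [hstate, hinit]
      | succ l =>
        simp only [StateAt] at hstate ⊢
        rcases hstate with h' | h'
        · rcases hpre l _ (by omega) h' with hh | hh
          · exact Or.inl hh
          · simp at hh
        · rcases hpre l _ (by omega) h' with hh | hh
          · exact Or.inr hh
          · simp at hh
  · simp at habs

/-- If `rely(r) ⋒ c ⊑ d` then `c ⊑ eguar(r) ⋒ d`. -/
theorem rely_wconj_ref_imp {S : Type} (r : Set (S × S)) (c d : Set (Trace S))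
    (hc : IsCommand c) (hd : IsCommand d) :
    Ref (wconj (relyC r) c) d → Ref c (wconj (eguarC r) d) := by
  intro href tr htr
  -- helper: `c` is abort-closed
  have hcab : ∀ t : Trace S, t ∈ aborting c → ∀ u : Trace S, t.init = u.init →
      SeqPrefix t.steps u.steps → u ∈ c := by
    intro t ht u hinit hpre
    have hmem : u ∈ abortClose c := Or.inr ⟨t, ht, hinit, hpre⟩
    rwa [← hc.2] at hmem
  simp only [wconj, abortFirst, Set.mem_union] at htr
  rcases htr with (hA | hB) | hC
  · -- tr ∈ eguar ∩ d
    have hd2 := href hA.2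
    simp only [wconj, abortFirst, Set.mem_union] at hd2
    rcases hd2 with (h1 | h2) | h3
    · exact h1.2
    · -- tr ∈ abortComplete (aborting rely ∩ c): impossible since tr ∈ eguar
      obtain ⟨t, ⟨htrely, htc⟩, htinit, htpre⟩ := h2
      obtain ⟨v, hvrely, hvinit, k, hk, hagree, hvk, hvlen⟩ := htrely
      exact (eguar_contra hA.1 hvrely hvk (hvinit.trans htinit)
        (fun i s hi hsi => Or.inl (htpre i s (by rw [← hagree i hi]; exact hsi)))).elim
    · -- tr ∈ abortComplete (aborting c ∩ rely)
      obtain ⟨t, ⟨htc, _⟩, htinit, htpre⟩ := h3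
      exact hcab t htc tr htinit htpre
  · -- tr ∈ abortComplete (aborting eguar ∩ d) : empty
    obtain ⟨t, ⟨hteg, _⟩, _, _⟩ := hB
    obtain ⟨u, hu, _, k, _, _, huk, _⟩ := hteg
    exact absurd huk (eguar_no_pnone hu k)
  · -- tr ∈ abortComplete (aborting d ∩ eguar)
    obtain ⟨t, ⟨htd, hteg⟩, htinit, htpre⟩ := hC
    obtain ⟨w, hwd, hwinit, N, hNlen, hNagree, hwN, hwlen⟩ := htd
    have hw2 := href hwd
    simp only [wconj, abortFirst, Set.mem_union] at hw2
    rcases hw2 with (h1 | h2) | h3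
    · -- w ∈ rely ∩ c, so t ∈ aborting c
      exact hcab t ⟨w, h1.2, hwinit, N, hNlen, hNagree, hwN, hwlen⟩ tr htinit htpre
    · -- w ∈ abortComplete (aborting rely ∩ c): contradiction with t ∈ eguar
      obtain ⟨t2, ⟨ht2rely, _⟩, ht2init, ht2pre⟩ := h2
      obtain ⟨v, hvrely, hvinit, k, hk, hagree, hvk, hvlen⟩ := ht2rely
      refine (eguar_contra hteg hvrely hvk
        (hvinit.trans (ht2init.trans hwinit)) ?_).elim
      intro i s hi hsi
      have hwi : w.steps i = some s := ht2pre i s (by rw [← hagree i hi]; exact hsi)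
      rcases lt_trichotomy i N with hiN | hiN | hiN
      · exact Or.inl (by rw [← hNagree i hiN]; exact hwi)
      · subst hiN
        rw [hwN] at hwi
        exact Or.inr (Option.some_injective _ hwi).symm
      · exfalso
        have hns : ¬ (w.steps i).isSome := by rw [hwlen i]; omega
        rw [hwi] at hns; simp at hns
    · -- w ∈ abortComplete (aborting c ∩ rely)
      obtain ⟨t2, ⟨ht2c, _⟩, ht2init, ht2pre⟩ := h3
      obtain ⟨u, hu, huinit, k, hklen, hkagree, huk, hulen⟩ := ht2c
      -- t2.steps is a prefix of t.steps
      have hsub : SeqPrefix t2.steps t.steps := by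
        intro i s hsi
        have hwi : w.steps i = some s := ht2pre i s hsi
        have hik : i < k := (hklen i).mp (by rw [hsi]; rfl)
        rcases lt_trichotomy i N with hiN | hiN | hiN
        · rw [← hNagree i hiN]; exact hwi
        · exfalso
          subst hiN
          rw [hwN] at hwi
          have hsval : s = Step.prog none := (Option.some_injective _ hwi).symm
          subst hsval
          have hu1 : u.steps i = some (Step.prog none) := by
            rw [hkagree i hik]; exact hsi
          have hnone := u.wf i _ hu1 trivial
          have h2' : (u.steps (i+1)).isSome := (hulen (i+1)).mpr (by omega)
          rw [hnone] at h2'; simp at h2'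
        · exfalso
          have hns : ¬ (w.steps i).isSome := by rw [hwlen i]; omega
          rw [hwi] at hns; simp at hns
      refine hcab t2 ⟨u, hu, huinit, k, hklen, hkagree, huk, hulen⟩ tr
        ((ht2init.trans hwinit).trans htinit) ?_
      intro i s hsi
      exact htpre i s (hsub i s hsi)

end Aczel
end
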